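/- arXiv:2207.10380 — 4 statements merged into one kernel-verified Lean document; each statement's English description precedes it below -/
import Mathlib

section
/- The group of units of the Gaussian integers maps bijectively onto the unit group of the quotient ring ℤ[i]/(2+2i) under the natural reduction map; in particular the four units 1, i, -1, -i represent the four distinct classes of (ℤ[i]/(2+2i))^×. -/
/-- The unit i of the Gaussian integers. -/
def gaussI : GaussianInt := ⟨0, 1⟩

namespace GaussAux

abbrev dd : GaussianInt := ⟨2, 2⟩

lemma dd_eq : (2 + 2 * gaussI : GaussianInt) = dd := by
  ext <;> simp [gaussI, dd, Zsqrtd.re_mul, Zsqrtd.im_mul]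

abbrev QQ := GaussianInt ⧸ Ideal.span {(dd : GaussianInt)}

abbrev mk : GaussianInt →+* QQ := Ideal.Quotient.mk _

lemma norm_dvd_of_dvd {a b : GaussianInt} (h : a ∣ b) : a.norm ∣ b.norm := by
  obtain ⟨c, rfl⟩ := h
  exact ⟨c.norm, by rw [Zsqrtd.norm_mul]⟩

lemma mk_eq_iff {a b : GaussianInt} : mk a = mk b ↔ dd ∣ a - b := by
  rw [Ideal.Quotient.eq, Ideal.mem_span_singleton]

lemma unit_cases {u : GaussianInt} (hu : IsUnit u) :
    u = 1 ∨ u = ⟨0,1⟩ ∨ u = -1 ∨ u = ⟨0,-1⟩ := by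
  have h := (Zsqrtd.norm_eq_one_iff' (by norm_num) u).mpr hu
  rw [Zsqrtd.norm_def] at h
  obtain ⟨a, b⟩ := u
  simp only at h
  have ha' : -1 ≤ a ∧ a ≤ 1 :=
    ⟨by nlinarith [sq_nonneg (a + 1), sq_nonneg b], by nlinarith [sq_nonneg (a - 1), sq_nonneg b]⟩
  have hb' : -1 ≤ b ∧ b ≤ 1 :=
    ⟨by nlinarith [sq_nonneg (b + 1), sq_nonneg a], by nlinarith [sq_nonneg (b - 1), sq_nonneg a]⟩
  obtain ⟨ha1, ha2⟩ := ha'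
  obtain ⟨hb1, hb2⟩ := hb'
  interval_cases a <;> interval_cases b <;>
    simp_all [Zsqrtd.ext_iff]

lemma not_unit_of_dvd {r : GaussianInt} (h : (⟨1,1⟩ : GaussianInt) ∣ r) :
    ¬ IsUnit (mk r) := by
  rintro ⟨v, hv⟩
  obtain ⟨w, hw⟩ := Ideal.Quotient.mk_surjective (↑v⁻¹ : QQ)
  have h1 : mk (r * w) = mk 1 := by
    rw [map_mul, hw, ← hv, Units.mul_inv, map_one]
  rw [mk_eq_iff] at h1
  obtain ⟨t, ht⟩ := h1
  have h2 : (⟨1,1⟩ : GaussianInt) ∣ 1 := by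
    have hdd : (⟨1,1⟩ : GaussianInt) ∣ dd :=
      ⟨⟨2,0⟩, by ext <;> simp [dd, Zsqrtd.re_mul, Zsqrtd.im_mul]⟩
    have he : (1 : GaussianInt) = r * w - dd * t := by linear_combination -ht
    rw [he]
    exact dvd_sub (h.mul_right w) (hdd.mul_right t)
  have h3 := norm_dvd_of_dvd h2
  simp [Zsqrtd.norm_def] at h3

lemma res_aux {r : GaussianInt} (hb : r.re * r.re + r.im * r.im ≤ 7)
    (hu : IsUnit (mk r)) :
    mk r = mk 1 ∨ mk r = mk ⟨0,1⟩ ∨ mk r = mk (-1) ∨ mk r = mk ⟨0,-1⟩ := by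
  obtain ⟨a, b⟩ := r
  simp only at hb
  have ha1 : -2 ≤ a := by nlinarith
  have ha2 : a ≤ 2 := by nlinarith
  have hb1 : -2 ≤ b := by nlinarith
  have hb2 : b ≤ 2 := by nlinarith
  interval_cases a <;> interval_cases b
  · exact absurd hb (by norm_num)
  · exact Or.inr <| Or.inl (mk_eq_iff.mpr ⟨⟨-1,0⟩, by decide⟩)
  · exact absurd hu (not_unit_of_dvd ⟨⟨-1,1⟩, by decide⟩)
  · exact Or.inr <| Or.inr <| Or.inr (mk_eq_iff.mpr ⟨⟨0,1⟩, by decide⟩)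
  · exact absurd hb (by norm_num)
  · exact Or.inl (mk_eq_iff.mpr ⟨⟨-1,0⟩, by decide⟩)
  · exact absurd hu (not_unit_of_dvd ⟨⟨-1,0⟩, by decide⟩)
  · exact Or.inr <| Or.inr <| Or.inl (mk_eq_iff.mpr ⟨⟨0,0⟩, by decide⟩)
  · exact absurd hu (not_unit_of_dvd ⟨⟨0,1⟩, by decide⟩)
  · exact Or.inl (mk_eq_iff.mpr ⟨⟨0,1⟩, by decide⟩)
  · exact absurd hu (not_unit_of_dvd ⟨⟨-1,-1⟩, by decide⟩)
  · exact Or.inr <| Or.inr <| Or.inr (mk_eq_iff.mpr ⟨⟨0,0⟩, by decide⟩)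
  · exact absurd hu (not_unit_of_dvd ⟨⟨0,0⟩, by decide⟩)
  · exact Or.inr <| Or.inl (mk_eq_iff.mpr ⟨⟨0,0⟩, by decide⟩)
  · exact absurd hu (not_unit_of_dvd ⟨⟨1,1⟩, by decide⟩)
  · exact Or.inr <| Or.inr <| Or.inl (mk_eq_iff.mpr ⟨⟨0,-1⟩, by decide⟩)
  · exact absurd hu (not_unit_of_dvd ⟨⟨0,-1⟩, by decide⟩)
  · exact Or.inl (mk_eq_iff.mpr ⟨⟨0,0⟩, by decide⟩)
  · exact absurd hu (not_unit_of_dvd ⟨⟨1,0⟩, by decide⟩)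
  · exact Or.inr <| Or.inr <| Or.inl (mk_eq_iff.mpr ⟨⟨1,0⟩, by decide⟩)
  · exact absurd hb (by norm_num)
  · exact Or.inr <| Or.inl (mk_eq_iff.mpr ⟨⟨0,-1⟩, by decide⟩)
  · exact absurd hu (not_unit_of_dvd ⟨⟨1,-1⟩, by decide⟩)
  · exact Or.inr <| Or.inr <| Or.inr (mk_eq_iff.mpr ⟨⟨1,0⟩, by decide⟩)
  · exact absurd hb (by norm_num)

lemma surj_aux {z : GaussianInt} (hz : IsUnit (mk z)) :
    mk z = mk 1 ∨ mk z = mk ⟨0,1⟩ ∨ mk z = mk (-1) ∨ mk z = mk ⟨0,-1⟩ := by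
  have hd0 : (dd : GaussianInt) ≠ 0 := by decide
  have hmod : mk z = mk (z % dd) := by
    rw [mk_eq_iff]
    have h := EuclideanDomain.div_add_mod z dd
    exact ⟨z / dd, by linear_combination -h⟩
  rw [hmod] at hz ⊢
  set r := z % dd with hr
  have hlt : r.norm.natAbs < dd.norm.natAbs := GaussianInt.natAbs_norm_mod_lt z hd0
  have hdn : dd.norm.natAbs = 8 := by decide
  rw [hdn] at hlt
  have hnn : 0 ≤ r.norm := Zsqrtd.norm_nonneg (by norm_num) r
  have h8 : r.norm < 8 := by
    rw [← Int.natAbs_of_nonneg hnn]; exact_mod_cast hlt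
  have h7 : r.re * r.re + r.im * r.im ≤ 7 := by
    rw [Zsqrtd.norm_def] at h8; linarith
  exact res_aux h7 hz

/-- i as a unit. -/
def iU : GaussianIntˣ := ⟨⟨0,1⟩, ⟨0,-1⟩, by decide, by decide⟩

end GaussAux

open GaussAux in
/-- The group of units of the Gaussian integers maps bijectively onto the unit group of the
quotient ring `ℤ[i]/(2+2i)` under the natural reduction map; in particular the four units
`1, i, -1, -i` represent the four distinct classes of `(ℤ[i]/(2+2i))ˣ`. -/
theorem units_gaussianInt_bijective_mod_two_add_two_i :
    Function.Bijective
      (Units.map (Ideal.Quotient.mk (Ideal.span {(2 + 2 * gaussI : GaussianInt)})).toMonoidHom :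
        GaussianIntˣ → (GaussianInt ⧸ Ideal.span {(2 + 2 * gaussI : GaussianInt)})ˣ) ∧
    Nat.card (GaussianInt ⧸ Ideal.span {(2 + 2 * gaussI : GaussianInt)})ˣ = 4 := by
  rw [dd_eq]
  set f := (Units.map (Ideal.Quotient.mk (Ideal.span {(dd : GaussianInt)})).toMonoidHom :
      GaussianIntˣ → QQˣ) with hf
  have hinj : Function.Injective f := by
    intro u v huv
    have h : mk u.val = mk v.val := congrArg Units.val huv
    rw [mk_eq_iff] at h
    have hu := unit_cases u.isUnit
    have hv := unit_cases v.isUnit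
    apply Units.ext
    rcases hu with h1 | h1 | h1 | h1 <;> rcases hv with h2 | h2 | h2 | h2 <;>
      rw [h1, h2] <;> rw [h1, h2] at h <;>
      first
        | rfl
        | · exfalso
            have h3 := norm_dvd_of_dvd h
            have hd8 : (dd : GaussianInt).norm = 8 := by decide
            rw [hd8] at h3
            revert h3
            decide
  have hsurj : Function.Surjective f := by
    intro v
    obtain ⟨z, hz⟩ := Ideal.Quotient.mk_surjective (v : QQ)
    have hzu : IsUnit (mk z) := by rw [hz]; exact v.isUnit
    have h4 := surj_aux hzu
    have key : ∀ u : GaussianIntˣ, mk z = mk u.val → ∃ w, f w = v := by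
      intro u hu
      refine ⟨u, Units.ext ?_⟩
      show mk u.val = v.val
      rw [← hu, hz]
    rcases h4 with h | h | h | h
    · exact key 1 h
    · exact key iU h
    · exact key (-1) (by rw [h]; rfl)
    · exact key (-iU) (by rw [h]; rfl)
  refine ⟨⟨hinj, hsurj⟩, ?_⟩
  have hcard : Nat.card QQˣ = Nat.card GaussianIntˣ :=
    (Nat.card_eq_of_bijective f ⟨hinj, hsurj⟩).symm
  rw [hcard]
  have hbij : Function.Bijective (fun n : Fin 4 => iU ^ (n : ℕ)) := by
    constructor
    · intro a b hab
      fin_cases a <;> fin_cases b <;> first | rfl | (exact absurd (congrArg Units.val hab) (by decide))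
    · intro u
      rcases unit_cases u.isUnit with h | h | h | h
      · exact ⟨0, Units.ext (by simpa [iU] using h.symm)⟩
      · exact ⟨1, Units.ext (by simpa [iU] using h.symm)⟩
      · exact ⟨2, Units.ext (by simp [iU, pow_succ]; rw [h]; decide)⟩
      · exact ⟨3, Units.ext (by simp [iU, pow_succ]; rw [h]; decide)⟩
  rw [← Nat.card_eq_of_bijective _ hbij]
  simp
end

section
/- Let s, t ∈ ℤ with s odd and s - t ≡ 3 (mod 4), and set D = 1 + (2+2i)(s+ti) ∈ ℤ[i]. Then (D+1-6i)/4 and (iD+6+9i)/8 lie in ℤ[i], the Weierstrass curve W over ℤ[i] given by y² + (1-i)xy + (1-2i)y = x³ - ix² - ((D+1-6i)/4)x + (iD+6+9i)/8 has discriminant D³ (which has odd norm), and the base change of W to ℚ(i) is obtained from the Weierstrass curve y² = x³ + D x over ℚ(i) by an admissible change of Weierstrass variables over ℚ(i). -/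
/-- Let `s, t ∈ ℤ` with `s` odd and `s - t ≡ 3 (mod 4)`, and set
`D = 1 + (2+2i)(s+ti) ∈ ℤ[i]`. Then `(D+1-6i)/4` and `(iD+6+9i)/8` lie in `ℤ[i]`, the
Weierstrass curve `W` over `ℤ[i]` given by
`y² + (1-i)xy + (1-2i)y = x³ - ix² - ((D+1-6i)/4)x + (iD+6+9i)/8` has discriminant `D³` (of
odd norm), and the base change of `W` to `ℚ(i)` is obtained from the Weierstrass curve
`y² = x³ + Dx` over `ℚ(i)` by an admissible change of Weierstrass variables over `ℚ(i)`. -/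
theorem good_reduction_model_s_odd
    (K : Type*) [Field K] [Algebra GaussianInt K] [IsFractionRing GaussianInt K]
    (s t : ℤ) (hs : Odd s) (hst : s - t ≡ 3 [ZMOD 4])
    (D : GaussianInt)
    (hD : D = 1 + (2 + 2 * gaussI) * ((s : GaussianInt) + (t : GaussianInt) * gaussI)) :
    ∃ a₄ a₆ : GaussianInt,
      4 * a₄ = D + 1 - 6 * gaussI ∧
      8 * a₆ = gaussI * D + 6 + 9 * gaussI ∧
      (⟨1 - gaussI, -gaussI, 1 - 2 * gaussI, -a₄, a₆⟩ : WeierstrassCurve GaussianInt).Δ = D ^ 3 ∧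
      Odd (Zsqrtd.norm (D ^ 3)) ∧
      ∃ C : WeierstrassCurve.VariableChange K,
        C • (⟨0, 0, 0, algebraMap GaussianInt K D, 0⟩ : WeierstrassCurve K) =
          (⟨1 - gaussI, -gaussI, 1 - 2 * gaussI, -a₄, a₆⟩ : WeierstrassCurve GaussianInt).map
            (algebraMap GaussianInt K) := by
  obtain ⟨n, hn⟩ := hs
  obtain ⟨k, hk⟩ := Int.ModEq.dvd hst
  have ht : t = 4 * k + s - 3 := by omega
  subst ht; subst hn; subst hD
  refine ⟨⟨2 - 2*k, 2*n - 2 + 2*k⟩, ⟨1 - n - k, 2 - k⟩, ?_, ?_, ?_, ?_, ?_⟩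
  · ext <;>
      simp only [gaussI, Zsqrtd.re_mul, Zsqrtd.im_mul,
        Zsqrtd.re_add, Zsqrtd.im_add, Zsqrtd.re_sub, Zsqrtd.im_sub, Zsqrtd.re_neg, Zsqrtd.im_neg,
        Zsqrtd.re_one, Zsqrtd.im_one, Zsqrtd.re_intCast, Zsqrtd.im_intCast,
        Zsqrtd.re_ofNat, Zsqrtd.im_ofNat] <;>
      ring
  · ext <;>
      simp only [gaussI, Zsqrtd.re_mul, Zsqrtd.im_mul,
        Zsqrtd.re_add, Zsqrtd.im_add, Zsqrtd.re_sub, Zsqrtd.im_sub, Zsqrtd.re_neg, Zsqrtd.im_neg,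
        Zsqrtd.re_one, Zsqrtd.im_one, Zsqrtd.re_intCast, Zsqrtd.im_intCast,
        Zsqrtd.re_ofNat, Zsqrtd.im_ofNat] <;>
      ring
  · simp only [WeierstrassCurve.Δ, WeierstrassCurve.b₂, WeierstrassCurve.b₄,
      WeierstrassCurve.b₆, WeierstrassCurve.b₈]
    ext <;>
      simp only [gaussI, pow_succ, pow_zero, one_mul, Zsqrtd.re_mul, Zsqrtd.im_mul,
        Zsqrtd.re_add, Zsqrtd.im_add, Zsqrtd.re_sub, Zsqrtd.im_sub, Zsqrtd.re_neg, Zsqrtd.im_neg,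
        Zsqrtd.re_one, Zsqrtd.im_one, Zsqrtd.re_intCast, Zsqrtd.im_intCast,
        Zsqrtd.re_ofNat, Zsqrtd.im_ofNat] <;>
      ring
  · have h : Odd (Zsqrtd.norm
        (1 + (2 + 2 * gaussI) *
          (((2 * n + 1 : ℤ) : GaussianInt) + ((4 * k + (2 * n + 1) - 3 : ℤ) : GaussianInt)
            * gaussI))) := by
      refine ⟨32 * k ^ 2 - 56 * k + 24 + 2 * (4 * n + 4 * k - 1) ^ 2, ?_⟩
      simp only [Zsqrtd.norm, gaussI, Zsqrtd.re_mul, Zsqrtd.im_mul,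
        Zsqrtd.re_add, Zsqrtd.im_add, Zsqrtd.re_sub, Zsqrtd.im_sub, Zsqrtd.re_neg, Zsqrtd.im_neg,
        Zsqrtd.re_one, Zsqrtd.im_one, Zsqrtd.re_intCast, Zsqrtd.im_intCast,
        Zsqrtd.re_ofNat, Zsqrtd.im_ofNat]
      ring
    rw [pow_succ, pow_two, Zsqrtd.norm_mul, Zsqrtd.norm_mul]
    exact (h.mul h).mul h
  · set φ := algebraMap GaussianInt K with hφ
    have hinj : Function.Injective φ := IsFractionRing.injective _ _
    have ha : IsUnit (φ (1 + gaussI)) := by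
      rw [isUnit_iff_ne_zero]
      intro h
      rw [← map_zero φ] at h
      exact absurd (congrArg Zsqrtd.re (hinj h)) (by simp [gaussI, Zsqrtd.ext_iff])
    have h0 : (0 : K) = φ 0 := (map_zero φ).symm
    have h1 : (1 : K) = φ 1 := (map_one φ).symm
    have h2 : (2 : K) = φ 2 := (map_ofNat φ 2).symm
    have h3 : (3 : K) = φ 3 := (map_ofNat φ 3).symm
    refine ⟨⟨ha.unit, 1, 1, φ (1 + 3 * gaussI)⟩, ?_⟩
    ext <;>
      simp only [WeierstrassCurve.variableChange_a₁, WeierstrassCurve.variableChange_a₂,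
        WeierstrassCurve.variableChange_a₃, WeierstrassCurve.variableChange_a₄,
        WeierstrassCurve.variableChange_a₆, WeierstrassCurve.map, ← Units.val_pow_eq_pow_val,
        inv_pow] <;>
      rw [Units.inv_mul_eq_iff_eq_mul] <;>
      simp only [Units.val_pow_eq_pow_val, IsUnit.unit_spec] <;>
      simp only [h0, h1, h2, h3] <;>
      simp only [← map_pow, ← map_mul, ← map_add, ← map_sub, ← map_neg] <;>
      refine congrArg φ ?_ <;>
      ext <;>
      simp only [gaussI, pow_succ, pow_zero, one_mul, Zsqrtd.re_mul, Zsqrtd.im_mul,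
        Zsqrtd.re_add, Zsqrtd.im_add, Zsqrtd.re_sub, Zsqrtd.im_sub, Zsqrtd.re_neg, Zsqrtd.im_neg,
        Zsqrtd.re_one, Zsqrtd.im_one, Zsqrtd.re_intCast, Zsqrtd.im_intCast,
        Zsqrtd.re_ofNat, Zsqrtd.im_ofNat, Zsqrtd.re_zero, Zsqrtd.im_zero] <;>
      ring
end

section
/- Let Δ ∈ ℤ[i] be nonzero with odd norm. Then the natural reduction map from the unit group {1, i, -1, -i} of ℤ[i] to (ℤ[i]/(4Δ))^× is injective, and the cardinality of (ℤ[i]/(4Δ))^× equals 8 times the cardinality of (ℤ[i]/(Δ))^×. -/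
/-! Auxiliary concrete model of `ℤ[i]/(4)`. -/

def G4 : Type := ZMod 4 × ZMod 4

namespace G4
instance : DecidableEq G4 := inferInstanceAs (DecidableEq (ZMod 4 × ZMod 4))
instance : Fintype G4 := inferInstanceAs (Fintype (ZMod 4 × ZMod 4))
instance : Zero G4 := ⟨((0:ZMod 4),(0:ZMod 4))⟩
instance : One G4 := ⟨((1:ZMod 4),(0:ZMod 4))⟩
instance : Add G4 := ⟨fun a b => (a.1 + b.1, a.2 + b.2)⟩
instance : Neg G4 := ⟨fun a => (-a.1, -a.2)⟩
instance : Mul G4 := ⟨fun a b => (a.1 * b.1 - a.2 * b.2, a.1 * b.2 + a.2 * b.1)⟩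

theorem zero_def : (0 : G4) = ((0:ZMod 4),(0:ZMod 4)) := rfl
theorem one_def : (1 : G4) = ((1:ZMod 4),(0:ZMod 4)) := rfl
theorem add_def (a b : G4) : a + b = (a.1 + b.1, a.2 + b.2) := rfl
theorem neg_def (a : G4) : -a = (-a.1, -a.2) := rfl
theorem mul_def (a b : G4) : a * b = (a.1 * b.1 - a.2 * b.2, a.1 * b.2 + a.2 * b.1) := rfl
@[simp] theorem zero_fst : (0 : G4).1 = 0 := rfl
@[simp] theorem zero_snd : (0 : G4).2 = 0 := rfl
@[simp] theorem one_fst : (1 : G4).1 = 1 := rfl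
@[simp] theorem one_snd : (1 : G4).2 = 0 := rfl
@[simp] theorem add_fst (a b : G4) : (a + b).1 = a.1 + b.1 := rfl
@[simp] theorem add_snd (a b : G4) : (a + b).2 = a.2 + b.2 := rfl
@[simp] theorem neg_fst (a : G4) : (-a).1 = -a.1 := rfl
@[simp] theorem neg_snd (a : G4) : (-a).2 = -a.2 := rfl
@[simp] theorem mul_fst (a b : G4) : (a * b).1 = a.1 * b.1 - a.2 * b.2 := rfl
@[simp] theorem mul_snd (a b : G4) : (a * b).2 = a.1 * b.2 + a.2 * b.1 := rfl

instance : CommRing G4 where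
  nsmul := nsmulRec
  zsmul := zsmulRec
  add_assoc a b c := by refine Prod.ext ?_ ?_ <;> simp <;> ring
  zero_add a := by refine Prod.ext ?_ ?_ <;> simp
  add_zero a := by refine Prod.ext ?_ ?_ <;> simp
  add_comm a b := by refine Prod.ext ?_ ?_ <;> simp <;> ring
  neg_add_cancel a := by refine Prod.ext ?_ ?_ <;> simp
  mul_assoc a b c := by refine Prod.ext ?_ ?_ <;> simp <;> ring
  one_mul a := by refine Prod.ext ?_ ?_ <;> simp
  mul_one a := by refine Prod.ext ?_ ?_ <;> simp
  mul_comm a b := by refine Prod.ext ?_ ?_ <;> simp <;> ring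
  left_distrib a b c := by refine Prod.ext ?_ ?_ <;> simp <;> ring
  right_distrib a b c := by refine Prod.ext ?_ ?_ <;> simp <;> ring
  zero_mul a := by refine Prod.ext ?_ ?_ <;> simp
  mul_zero a := by refine Prod.ext ?_ ?_ <;> simp

set_option maxHeartbeats 1000000 in
theorem card_units : Nat.card G4ˣ = 8 := by
  rw [Nat.card_eq_fintype_card]
  decide

end G4

/-- The reduction homomorphism `ℤ[i] → G4`. -/
def gaussToG4 : GaussianInt →+* G4 where
  toFun z := ((z.re : ZMod 4), (z.im : ZMod 4))
  map_one' := by refine Prod.ext ?_ ?_ <;> simp [G4.one_def]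
  map_zero' := by refine Prod.ext ?_ ?_ <;> simp [G4.zero_def]
  map_add' z w := by refine Prod.ext ?_ ?_ <;> simp [Zsqrtd.re_add, Zsqrtd.im_add] <;> rfl
  map_mul' z w := by
    refine Prod.ext ?_ ?_
    · show (((z * w).re : ℤ) : ZMod 4) = (z.re : ZMod 4) * w.re - (z.im : ZMod 4) * w.im
      push_cast [Zsqrtd.re_mul]; ring
    · show (((z * w).im : ℤ) : ZMod 4) = (z.re : ZMod 4) * w.im + (z.im : ZMod 4) * w.re
      push_cast [Zsqrtd.im_mul]; ring

theorem gaussToG4_surjective : Function.Surjective gaussToG4 := by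
  rintro ⟨a, b⟩
  obtain ⟨x, rfl⟩ := ZMod.intCast_surjective a
  obtain ⟨y, rfl⟩ := ZMod.intCast_surjective b
  exact ⟨⟨x, y⟩, rfl⟩

theorem gaussToG4_ker : RingHom.ker gaussToG4 = Ideal.span {(4 : GaussianInt)} := by
  ext z
  rw [RingHom.mem_ker, Ideal.mem_span_singleton,
    show (4 : GaussianInt) = ((4 : ℤ) : GaussianInt) by push_cast; ring,
    Zsqrtd.intCast_dvd]
  constructor
  · intro h
    have h1 := congrArg Prod.fst h
    have h2 := congrArg Prod.snd h
    simp only [gaussToG4, RingHom.coe_mk, MonoidHom.coe_mk, OneHom.coe_mk, G4.zero_def] at h1 h2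
    constructor
    · exact_mod_cast (ZMod.intCast_zmod_eq_zero_iff_dvd z.re 4).mp h1
    · exact_mod_cast (ZMod.intCast_zmod_eq_zero_iff_dvd z.im 4).mp h2
  · rintro ⟨h1, h2⟩
    refine Prod.ext ?_ ?_ <;>
      refine (ZMod.intCast_zmod_eq_zero_iff_dvd _ 4).mpr ?_ <;> exact_mod_cast ‹_›

/-- `ℤ[i]/(4) ≃+* G4`. -/
noncomputable def quotFourEquiv : (GaussianInt ⧸ Ideal.span {(4 : GaussianInt)}) ≃+* G4 :=
  (Ideal.quotEquivOfEq gaussToG4_ker.symm).trans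
    (RingHom.quotientKerEquivOfSurjective gaussToG4_surjective)

theorem four_coprime (Δ : GaussianInt) (hodd : Odd (Zsqrtd.norm Δ)) :
    IsCoprime (4 : GaussianInt) Δ := by
  classical
  rw [← EuclideanDomain.gcd_isUnit_iff]
  set g := EuclideanDomain.gcd (4 : GaussianInt) Δ with hg
  have hg4 : g ∣ 4 := EuclideanDomain.gcd_dvd_left _ _
  have hgΔ : g ∣ Δ := EuclideanDomain.gcd_dvd_right _ _
  have hn4 : g.norm ∣ 16 := by
    obtain ⟨c, hc⟩ := hg4
    refine ⟨c.norm, ?_⟩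
    have : Zsqrtd.norm (4 : GaussianInt) = 16 := by
      rw [show (4 : GaussianInt) = ((4 : ℤ) : GaussianInt) by push_cast; ring,
        Zsqrtd.norm_intCast]; norm_num
    rw [← this, hc, Zsqrtd.norm_mul]
  have hnΔ : g.norm ∣ Δ.norm := by
    obtain ⟨c, hc⟩ := hgΔ
    exact ⟨c.norm, by rw [hc, Zsqrtd.norm_mul]⟩
  rw [← Zsqrtd.norm_eq_one_iff]
  set n := g.norm.natAbs with hn
  have hn16 : n ∣ 16 := by
    have := Int.natAbs_dvd_natAbs.mpr hn4
    simpa using this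
  have hnodd : Odd n := by
    rcases Nat.even_or_odd n with he | ho
    · exfalso
      have hg2 : Even g.norm := Int.natAbs_even.mp he
      obtain ⟨c, hc⟩ := hnΔ
      have : Even Δ.norm := by rw [hc]; exact hg2.mul_right c
      exact (Int.not_even_iff_odd.mpr hodd) this
    · exact ho
  have hcop : Nat.Coprime n 16 := by
    have h2 : Nat.Coprime n 2 := Nat.coprime_two_right.mpr hnodd
    have : Nat.Coprime n (2 ^ 4) := h2.pow_right 4
    simpa using this
  exact hcop.eq_one_of_dvd hn16

/-- Let `Δ ∈ ℤ[i]` be nonzero with odd norm. Then the natural reduction map from the unit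
group `{1, i, -1, -i}` of `ℤ[i]` to `(ℤ[i]/(4Δ))ˣ` is injective, and the cardinality of
`(ℤ[i]/(4Δ))ˣ` equals `8` times the cardinality of `(ℤ[i]/(Δ))ˣ`. -/
theorem units_mod_four_delta (Δ : GaussianInt) (hΔ : Δ ≠ 0) (hodd : Odd (Zsqrtd.norm Δ)) :
    Function.Injective
      (fun u : GaussianIntˣ =>
        Units.map (Ideal.Quotient.mk (Ideal.span {(4 * Δ : GaussianInt)})).toMonoidHom u) ∧
    Nat.card (GaussianInt ⧸ Ideal.span {(4 * Δ : GaussianInt)})ˣ =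
      8 * Nat.card (GaussianInt ⧸ Ideal.span {Δ})ˣ := by
  constructor
  · intro u v huv
    have h1 : Ideal.Quotient.mk (Ideal.span {(4 * Δ : GaussianInt)}) u.val =
        Ideal.Quotient.mk _ v.val := congrArg Units.val huv
    rw [Ideal.Quotient.eq, Ideal.mem_span_singleton] at h1
    have h4 : ((4 : ℤ) : GaussianInt) ∣ (u.val - v.val) := by
      refine dvd_trans ?_ h1
      rw [show ((4 : ℤ) : GaussianInt) = 4 by push_cast; ring]
      exact dvd_mul_right 4 Δ
    rw [Zsqrtd.intCast_dvd] at h4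
    obtain ⟨hre, him⟩ := h4
    rw [Zsqrtd.re_sub] at hre
    rw [Zsqrtd.im_sub] at him
    have nu : (u.val).norm = 1 := (Zsqrtd.norm_eq_one_iff' (by norm_num) _).mpr u.isUnit
    have nv : (v.val).norm = 1 := (Zsqrtd.norm_eq_one_iff' (by norm_num) _).mpr v.isUnit
    rw [Zsqrtd.norm_def] at nu nv
    have bu1 : u.val.re ≤ 1 := by nlinarith [sq_nonneg u.val.re, sq_nonneg u.val.im]
    have bu2 : -1 ≤ u.val.re := by nlinarith [sq_nonneg u.val.re, sq_nonneg u.val.im]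
    have bu3 : u.val.im ≤ 1 := by nlinarith [sq_nonneg u.val.re, sq_nonneg u.val.im]
    have bu4 : -1 ≤ u.val.im := by nlinarith [sq_nonneg u.val.re, sq_nonneg u.val.im]
    have bv1 : v.val.re ≤ 1 := by nlinarith [sq_nonneg v.val.re, sq_nonneg v.val.im]
    have bv2 : -1 ≤ v.val.re := by nlinarith [sq_nonneg v.val.re, sq_nonneg v.val.im]
    have bv3 : v.val.im ≤ 1 := by nlinarith [sq_nonneg v.val.re, sq_nonneg v.val.im]
    have bv4 : -1 ≤ v.val.im := by nlinarith [sq_nonneg v.val.re, sq_nonneg v.val.im]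
    have : u.val = v.val := Zsqrtd.ext_iff.mpr ⟨by omega, by omega⟩
    exact Units.ext this
  · have hsp : Ideal.span {(4 * Δ : GaussianInt)} =
        Ideal.span {(4 : GaussianInt)} * Ideal.span {Δ} :=
      (Ideal.span_singleton_mul_span_singleton _ _).symm
    have hco : IsCoprime (Ideal.span {(4 : GaussianInt)}) (Ideal.span {Δ}) :=
      (Ideal.isCoprime_span_singleton_iff _ _).mpr (four_coprime Δ hodd)
    have E := (Ideal.quotEquivOfEq hsp).trans
      (Ideal.quotientMulEquivQuotientProd _ _ hco)
    calc Nat.card (GaussianInt ⧸ Ideal.span {(4 * Δ : GaussianInt)})ˣ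
        = Nat.card ((GaussianInt ⧸ Ideal.span {(4:GaussianInt)}) ×
            (GaussianInt ⧸ Ideal.span {Δ}))ˣ :=
          Nat.card_congr (Units.mapEquiv E.toMulEquiv).toEquiv
      _ = Nat.card ((GaussianInt ⧸ Ideal.span {(4:GaussianInt)})ˣ ×
            (GaussianInt ⧸ Ideal.span {Δ})ˣ) := Nat.card_congr MulEquiv.prodUnits.toEquiv
      _ = Nat.card (GaussianInt ⧸ Ideal.span {(4:GaussianInt)})ˣ *
            Nat.card (GaussianInt ⧸ Ideal.span {Δ})ˣ := Nat.card_prod _ _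
      _ = 8 * Nat.card (GaussianInt ⧸ Ideal.span {Δ})ˣ := by
          rw [Nat.card_congr (Units.mapEquiv quotFourEquiv.toMulEquiv).toEquiv, G4.card_units]
end

section
/- For every real s > 0, the family indexed by nonzero Gaussian integers w of the complex numbers 1/(w² · |w|^{2s}) (where w is regarded as a complex number) is summable, and its sum equals 0. (This is the statement s₂(L) = 0 for the square lattice L = ℤ[i], where s₂(L) = lim_{s→0⁺} ∑_{w ∈ L∖{0}} w⁻²|w|^{-2s}.) -/
open GaussianInt

noncomputable def fGI (s : ℝ) (w : {w : GaussianInt // w ≠ 0}) : ℂ :=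
  1 / ((GaussianInt.toComplex w.1) ^ 2 *
        ((‖GaussianInt.toComplex w.1‖ ^ (2 * s) : ℝ) : ℂ))

lemma summable_fGI (s : ℝ) (hs : 0 < s) : Summable (fGI s) := by
  have hk : (2 : ℝ) < 2 + 2 * s := by linarith
  have hsum := EisensteinSeries.summable_one_div_norm_rpow hk
  set g : {w : GaussianInt // w ≠ 0} → (Fin 2 → ℤ) :=
    fun w => ![w.1.re, w.1.im] with hg
  have hinj : Function.Injective g := by
    intro a b hab
    have h0 := congrFun hab 0
    have h1 := congrFun hab 1
    simp [hg] at h0 h1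
    exact Subtype.ext (Zsqrtd.ext h0 h1)
  have hsum2 : Summable (fun w : {w : GaussianInt // w ≠ 0} => ‖g w‖ ^ (-(2 + 2 * s))) :=
    hsum.comp_injective hinj
  apply Summable.of_norm
  apply hsum2.of_nonneg_of_le (fun w => norm_nonneg _)
  intro w
  have habs : (0 : ℝ) < ‖toComplex w.1‖ := by
    simp [toComplex_eq_zero, w.2]
  have hnormle : ‖g w‖ ≤ ‖toComplex w.1‖ := by
    rw [pi_norm_le_iff_of_nonneg (by positivity)]
    intro i
    fin_cases i
    · simpa [hg, ← intCast_re, Int.norm_eq_abs] using Complex.abs_re_le_norm (toComplex w.1)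
    · simpa [hg, ← intCast_im, Int.norm_eq_abs] using Complex.abs_im_le_norm (toComplex w.1)
  have hgpos : (0 : ℝ) < ‖g w‖ := by
    rcases eq_or_lt_of_le (norm_nonneg (g w)) with h | h
    · exfalso
      have : g w = 0 := by rwa [eq_comm, _root_.norm_eq_zero] at h
      have h0 := congrFun this 0
      have h1 := congrFun this 1
      simp [hg] at h0 h1
      exact w.2 (Zsqrtd.ext h0 h1)
    · exact h
  have key : ‖fGI s w‖ = ‖toComplex w.1‖ ^ (-(2 + 2 * s)) := by
    rw [fGI]
    rw [norm_div, norm_one, norm_mul]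
    rw [norm_pow]
    rw [Complex.norm_real, Real.norm_eq_abs, abs_of_nonneg (Real.rpow_nonneg habs.le _)]
    rw [← Real.rpow_natCast ‖toComplex w.1‖ 2,
      ← Real.rpow_add habs, Real.rpow_neg habs.le, one_div]
    norm_num
  rw [key]
  exact Real.rpow_le_rpow_of_nonpos hgpos hnormle (by linarith)

def iEquiv : {w : GaussianInt // w ≠ 0} ≃ {w : GaussianInt // w ≠ 0} where
  toFun := fun w => ⟨⟨0,1⟩ * w.1, mul_ne_zero (fun h => absurd (congrArg Zsqrtd.im h) (by simp)) w.2⟩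
  invFun := fun w => ⟨⟨0,-1⟩ * w.1, mul_ne_zero (fun h => absurd (congrArg Zsqrtd.im h) (by simp)) w.2⟩
  left_inv := fun w => by
    apply Subtype.ext
    show (⟨0,-1⟩ : GaussianInt) * (⟨0,1⟩ * w.1) = w.1
    rw [← mul_assoc]
    have h1 : (⟨0,-1⟩ : GaussianInt) * ⟨0,1⟩ = 1 := by
      ext <;> simp [Zsqrtd.re_mul, Zsqrtd.im_mul]
    rw [h1, one_mul]
  right_inv := fun w => by
    apply Subtype.ext
    show (⟨0,1⟩ : GaussianInt) * (⟨0,-1⟩ * w.1) = w.1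
    rw [← mul_assoc]
    have h1 : (⟨0,1⟩ : GaussianInt) * ⟨0,-1⟩ = 1 := by
      ext <;> simp [Zsqrtd.re_mul, Zsqrtd.im_mul]
    rw [h1, one_mul]

lemma sum_fGI (s : ℝ) (hs : 0 < s) : ∑' w, fGI s w = 0 := by
  set e := iEquiv
  have hneg : ∀ w, fGI s (e w) = - fGI s w := by
    intro w
    have hval : (e w).1 = ⟨0,1⟩ * w.1 := rfl
    have hI : toComplex (⟨0,1⟩ : GaussianInt) = Complex.I := by simp [toComplex_def']
    simp only [fGI, hval, toComplex_mul, hI, mul_pow, Complex.I_sq, map_mul, norm_mul, Complex.norm_I,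
      one_mul]
    rw [neg_one_mul, neg_mul, div_neg]
  have h2 : ∑' w, fGI s w = - ∑' w, fGI s w := by
    conv_lhs => rw [← e.tsum_eq (fGI s)]
    rw [tsum_congr hneg, tsum_neg]
  linear_combination h2 / 2

/-- For every real `s > 0`, the family indexed by nonzero Gaussian integers `w` of the
complex numbers `1/(w² · |w|^{2s})` is summable, and its sum equals `0`. This is the
statement `s₂(L) = 0` for the square lattice `L = ℤ[i]`. -/
theorem s2_gaussian_lattice_eq_zero (s : ℝ) (hs : 0 < s) :
    Summable (fun w : {w : GaussianInt // w ≠ 0} =>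
      1 / ((GaussianInt.toComplex w.1) ^ 2 *
        ((‖GaussianInt.toComplex w.1‖ ^ (2 * s) : ℝ) : ℂ))) ∧
    ∑' w : {w : GaussianInt // w ≠ 0},
      1 / ((GaussianInt.toComplex w.1) ^ 2 *
        ((‖GaussianInt.toComplex w.1‖ ^ (2 * s) : ℝ) : ℂ)) = 0 := by
  exact ⟨summable_fGI s hs, sum_fGI s hs⟩
end
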